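/- arXiv:2401.02111 — 2 statements merged into one kernel-verified Lean document; each statement's English description precedes it below -/
import Mathlib

section
/- Let S = K[x_1,...,x_4] and I = ((x_1x_2)^{w_1}, x_2x_3, (x_3x_4)^{w_3}) with w_1 ≥ w_3 ≥ 2. Then for any t ≥ 2 and any 1 ≤ ℓ ≤ t-2, ((I^t : (x_2x_3)^ℓ) + (x_2x_3)) = ((x_1x_2)^{(t-ℓ)w_1}, x_2x_3, (x_3x_4)^{(t-ℓ)w_3}). -/
/-!
Every ideal involved is monomial. Write `a = (x₁x₂)^{w₁}`, `b = x₂x₃`, `c = (x₃x₄)^{w₃}`. If a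
monomial `m` satisfies `m b^ℓ ∈ I^t`, then `aⁱbʲcᵏ ∣ m (x₂x₃)^ℓ` for some `i + j + k = t`. When
`x₃ ∤ m`, the `x₃`-degree gives `j + w₃k ≤ ℓ`, so `k ≤ (ℓ - j)/2` and `a` occurs at least
`t - ℓ + (ℓ - j)/2` times; as `w₁ ≥ 2`, the surplus factors of `a` supply the `x₂^{ℓ-j}` borrowed
from `b^ℓ`, whence `(x₁x₂)^{(t-ℓ)w₁} ∣ m`. Symmetrically when `x₂ ∤ m`; otherwise `x₂x₃ ∣ m`.
-/

open MvPolynomial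

theorem sub_mul_add_le_mul_add_of_add_mul_le {w v i j k t l : ℕ} (hw : 2 ≤ w) (hv : 2 ≤ v)
    (hl : l ≤ t) (hsum : i + j + k = t) (hk : j + k * v ≤ l) : (t - l) * w + l ≤ i * w + j := by
  have h2k : k * 2 ≤ k * v := Nat.mul_le_mul_left k hv
  have hi : i = (t - l) + (l - j - k) := by omega
  have h2r : (l - j - k) * 2 ≤ (l - j - k) * w := Nat.mul_le_mul_left _ hw
  rw [hi, Nat.add_mul]
  omega

theorem Finsupp.single_add_single_le_iff {ι α : Type*} [AddCommMonoid α] [PartialOrder α]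
    [CanonicallyOrderedAdd α] {u v : ι} (huv : u ≠ v) {n p : α} {m : ι →₀ α} : single u n + single v p ≤ m ↔ n ≤ m u ∧ p ≤ m v := by
  constructor
  · intro h
    exact ⟨by simpa [huv.symm] using h u, by simpa [huv] using h v⟩
  · rintro ⟨hu, hv⟩ x
    by_cases hxu : x = u
    · subst hxu; simpa [huv] using hu
    · by_cases hxv : x = v
      · subst hxv; simpa [hxu] using hv
      · simp [Ne.symm hxu, Ne.symm hxv]

theorem Ideal.span_triple_pow_le {R : Type*} [CommSemiring R] (a b c : R) (n : ℕ) :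
    Ideal.span {a, b, c} ^ n ≤
      Ideal.span {x | ∃ i j k, i + j + k = n ∧ x = a ^ i * b ^ j * c ^ k} := by
  induction n with
  | zero => simp [Ideal.one_eq_top]
  | succ n ih =>
    rw [pow_succ]
    refine (Ideal.mul_mono_left ih).trans ?_
    rw [Ideal.span_mul_span', Ideal.span_le]
    rintro _ ⟨_, ⟨i, j, k, hn, rfl⟩, _, (rfl | rfl | rfl), rfl⟩
    · exact Ideal.subset_span ⟨i + 1, j, k, by omega, by ring⟩
    · exact Ideal.subset_span ⟨i, j + 1, k, by omega, by ring⟩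
    · exact Ideal.subset_span ⟨i, j, k + 1, by omega, by ring⟩

theorem Ideal.pow_sub_mem_colon_span_pow {R : Type*} [CommSemiring R] {I : Ideal R} {a b : R}
    (ha : a ∈ I) (hb : b ∈ I) {t l : ℕ} (hl : l ≤ t) :
    a ^ (t - l) ∈ (I ^ t).colon ((Ideal.span {b ^ l} : Ideal R) : Set R) := by
  rw [Ideal.mem_colon_span_singleton, ← Nat.sub_add_cancel hl, pow_add, Nat.add_sub_cancel]
  exact Ideal.mul_mem_mul (Ideal.pow_mem_pow ha _) (Ideal.pow_mem_pow hb _)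

namespace MvPolynomial

variable {σ R : Type*} [CommSemiring R]

theorem X_mul_X_pow (u v : σ) (n : ℕ) :
    (X u * X v : MvPolynomial σ R) ^ n = monomial (Finsupp.single u n + Finsupp.single v n) 1 := by
  rw [mul_pow, X_pow_eq_monomial, X_pow_eq_monomial, monomial_mul, one_mul]

theorem X_mul_X_eq_monomial (u v : σ) :
    (X u * X v : MvPolynomial σ R) = monomial (Finsupp.single u 1 + Finsupp.single v 1) 1 := by
  simpa using X_mul_X_pow (R := R) u v 1

theorem span_monomial_triple_pow_le (p q r : σ →₀ ℕ) (n : ℕ) :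
    Ideal.span {monomial p (1 : R), monomial q 1, monomial r 1} ^ n ≤
      Ideal.span ((fun s => monomial s (1 : R)) ''
        {s | ∃ i j k, i + j + k = n ∧ s = i • p + j • q + k • r}) := by
  refine (Ideal.span_triple_pow_le _ _ _ n).trans (Ideal.span_mono ?_)
  rintro _ ⟨i, j, k, hn, rfl⟩
  exact ⟨_, ⟨i, j, k, hn, rfl⟩, by simp only [monomial_pow, monomial_mul, one_pow, mul_one]⟩

theorem mem_ideal_span_monomial_triple {x : MvPolynomial σ R} {p q r : σ →₀ ℕ} :
    x ∈ Ideal.span {monomial p (1 : R), monomial q 1, monomial r 1} ↔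
      ∀ m ∈ x.support, p ≤ m ∨ q ≤ m ∨ r ≤ m := by
  simpa [Set.image_insert_eq] using mem_ideal_span_monomial_image (x := x) (s := {p, q, r})

theorem exists_le_add_of_mul_monomial_mem {S : Set (σ →₀ ℕ)} {f : MvPolynomial σ R}
    {d : σ →₀ ℕ} (h : f * monomial d 1 ∈ Ideal.span ((fun s => monomial s (1 : R)) '' S))
    {m : σ →₀ ℕ} (hm : m ∈ f.support) : ∃ s ∈ S, s ≤ m + d := by
  refine mem_ideal_span_monomial_image.1 h _ ?_
  rwa [mem_support_iff, coeff_mul_monomial, mul_one, ← mem_support_iff]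

end MvPolynomial

open Finsupp in
theorem exists_path4_generator_le {w1 w3 t l i j k : ℕ} (hw1 : 2 ≤ w1) (hw3 : 2 ≤ w3)
    (hl : l ≤ t) (hsum : i + j + k = t) {m : Fin 4 →₀ ℕ}
    (hle : i • (single 0 w1 + single 1 w1) + j • (single 1 1 + single 2 1) +
      k • (single 2 w3 + single 3 w3) ≤ m + (single 1 l + single 2 l)) :
    single 0 ((t - l) * w1) + single 1 ((t - l) * w1) ≤ m ∨ single 1 1 + single 2 1 ≤ m ∨
      single 2 ((t - l) * w3) + single 3 ((t - l) * w3) ≤ m := by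
  have h0 : i * w1 ≤ m 0 := by simpa using hle 0
  have h1 : i * w1 + j ≤ m 1 + l := by simpa using hle 1
  have h2 : j + k * w3 ≤ m 2 + l := by simpa using hle 2
  have h3 : k * w3 ≤ m 3 := by simpa using hle 3
  simp only [single_add_single_le_iff (by decide : (0 : Fin 4) ≠ 1),
    single_add_single_le_iff (by decide : (1 : Fin 4) ≠ 2),
    single_add_single_le_iff (by decide : (2 : Fin 4) ≠ 3)]
  rcases Nat.eq_zero_or_pos (m 2) with hm2 | hm2
  · have := sub_mul_add_le_mul_add_of_add_mul_le hw1 hw3 hl hsum (by omega)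
    left; omega
  rcases Nat.eq_zero_or_pos (m 1) with hm1 | hm1
  · have := sub_mul_add_le_mul_add_of_add_mul_le hw3 hw1 hl (by omega : k + j + i = t) (by omega)
    right; right; omega
  · right; left; omega

theorem path4_colon_le (K : Type*) [Field K] {w1 w3 t l : ℕ} (hw1 : 2 ≤ w1) (hw3 : 2 ≤ w3)
    (hl : l ≤ t) :
    (Ideal.span {(X 0 * X 1) ^ w1, X 1 * X 2, (X 2 * X 3) ^ w3} ^ t).colon
        ((Ideal.span {(X 1 * X 2) ^ l} : Ideal (MvPolynomial (Fin 4) K)) :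
          Set (MvPolynomial (Fin 4) K)) ≤
      Ideal.span {(X 0 * X 1) ^ ((t - l) * w1), X 1 * X 2, (X 2 * X 3) ^ ((t - l) * w3)} := by
  intro f hf
  rw [Ideal.mem_colon_span_singleton] at hf
  -- two passes: rewriting the base `X u * X v` first would leave `monomial _ 1 ^ n`
  simp only [X_mul_X_pow] at hf ⊢
  simp only [X_mul_X_eq_monomial] at hf ⊢
  have hf' := span_monomial_triple_pow_le _ _ _ t hf
  rw [mem_ideal_span_monomial_triple]
  intro m hm
  obtain ⟨_, ⟨i, j, k, hsum, rfl⟩, hle⟩ := exists_le_add_of_mul_monomial_mem hf' hm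
  exact exists_path4_generator_le hw1 hw3 hl hsum hle

theorem path4_colon_middle_sup_general (K : Type) [Field K] (w1 w3 : ℕ)
    (hw3 : 2 ≤ w3) (h13 : w3 ≤ w1) (t : ℕ)
    (l : ℕ) (hl2 : l ≤ t - 2)
    (I : Ideal (MvPolynomial (Fin 4) K))
    (hI : I = Ideal.span {(X 0 * X 1) ^ w1, X 1 * X 2, (X 2 * X 3) ^ w3}) :
    ((I ^ t).colon ((Ideal.span {(X 1 * X 2) ^ l} : Ideal (MvPolynomial (Fin 4) K)) : Set (MvPolynomial (Fin 4) K))) ⊔ Ideal.span {X 1 * X 2} =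
      Ideal.span {(X 0 * X 1) ^ ((t - l) * w1), X 1 * X 2,
        (X 2 * X 3) ^ ((t - l) * w3)} := by
  have hl : l ≤ t := hl2.trans (Nat.sub_le t 2)
  subst hI
  refine le_antisymm (sup_le (path4_colon_le K (hw3.trans h13) hw3 hl) ?_) ?_
  · exact (Ideal.span_singleton_le_iff_mem _).2 (Ideal.subset_span (by simp))
  rw [Ideal.span_le]
  rintro _ (rfl | rfl | rfl)
  · rw [mul_comm (t - l), pow_mul]
    exact Ideal.mem_sup_left <|
      Ideal.pow_sub_mem_colon_span_pow (Ideal.subset_span (by simp)) (Ideal.subset_span (by simp)) hl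
  · exact Ideal.mem_sup_right (Ideal.mem_span_singleton_self _)
  · rw [mul_comm (t - l), pow_mul]
    exact Ideal.mem_sup_left <|
      Ideal.pow_sub_mem_colon_span_pow (Ideal.subset_span (by simp)) (Ideal.subset_span (by simp)) hl

/-- for `I = ((x_1x_2)^{w_1}, x_2x_3, (x_3x_4)^{w_3})` with
`w_1 ≥ w_3 ≥ 2`, for `t ≥ 2` and `1 ≤ ℓ ≤ t-2`:
`(I^t : (x_2x_3)^ℓ) + (x_2x_3) = ((x_1x_2)^{(t-ℓ)w_1}, x_2x_3, (x_3x_4)^{(t-ℓ)w_3})`. -/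
theorem path4_colon_middle_sup (K : Type) [Field K] (w1 w3 : ℕ)
    (hw3 : 2 ≤ w3) (h13 : w3 ≤ w1) (t : ℕ) (ht : 2 ≤ t)
    (l : ℕ) (hl1 : 1 ≤ l) (hl2 : l ≤ t - 2)
    (I : Ideal (MvPolynomial (Fin 4) K))
    (hI : I = Ideal.span {(X 0 * X 1) ^ w1, X 1 * X 2, (X 2 * X 3) ^ w3}) :
    ((I ^ t).colon ((Ideal.span {(X 1 * X 2) ^ l} : Ideal (MvPolynomial (Fin 4) K)) : Set (MvPolynomial (Fin 4) K))) ⊔ Ideal.span {X 1 * X 2} =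
      Ideal.span {(X 0 * X 1) ^ ((t - l) * w1), X 1 * X 2,
        (X 2 * X 3) ^ ((t - l) * w3)} :=
  path4_colon_middle_sup_general K w1 w3 hw3 h13 t l hl2 I hI
end

section
/- Let S = K[x_1, x_2, x_3] and I = ((x_1x_2)^{w_1}, x_2x_3) with w_1 ≥ 2. Then for all t ≥ 1, reg(S/I^t) = 2t·w_1 - 1 and depth(S/I^t) = 1. -/
open MvPolynomial

noncomputable section

namespace EWGraph

variable (K : Type) [Field K]

/-- The polynomial ring `K[x_1,…,x_n]`. -/
abbrev Poly (n : ℕ) := MvPolynomial (Fin n) K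

variable {K}

/-- `g` is the degree-`d` part of a twisted copy `S(-tw)` of the polynomial ring:
it is homogeneous of degree `d - tw` (and `0` if `d - tw < 0`). -/
def PieceHomog {n : ℕ} (tw d : ℤ) (g : Poly K n) : Prop :=
  if 0 ≤ d - tw then g.IsHomogeneous (d - tw).toNat else g = 0

/-- The augmentation map `S^m → S` sending the `k`-th basis vector to `g k`. -/
def aug {n m : ℕ} (g : Fin m → Poly K n) : (Fin m → Poly K n) →ₗ[Poly K n] Poly K n where
  toFun v := ∑ k, v k * g k
  map_add' u v := by simp [add_mul, Finset.sum_add_distrib]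
  map_smul' c v := by simp [Finset.mul_sum, mul_assoc]

/-- A graded free resolution
`⋯ → F_1 → F_0 → S → S/I → 0` of `S/I`, where `F_i = ⊕_k S(-t i k)` has rank `r i`,
all differentials are given by homogeneous matrices, the image of `F_0 → S` is `I`,
and the complex is exact in positive degrees. -/
structure GradedRes {n : ℕ} (I : Ideal (Poly K n)) where
  r : ℕ → ℕ
  t : (i : ℕ) → Fin (r i) → ℤ
  g : Fin (r 0) → Poly K n
  ghom : ∀ k, PieceHomog 0 (t 0 k) (g k)
  gspan : Ideal.span (Set.range g) = I
  d : (i : ℕ) → Matrix (Fin (r i)) (Fin (r (i + 1))) (Poly K n)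
  dhom : ∀ i k k', PieceHomog (t i k) (t (i + 1) k') (d i k k')
  exact_zero : LinearMap.ker (aug g) = LinearMap.range (d 0).mulVecLin
  exact_succ : ∀ i, LinearMap.ker (d i).mulVecLin = LinearMap.range (d (i + 1)).mulVecLin

/-- The projective dimension of `S/I`: the smallest possible length of a graded free
resolution of `S/I` (the minimal graded free resolution achieves it). -/
def pdQuot {n : ℕ} (I : Ideal (Poly K n)) : ℕ :=
  sInf {m : ℕ | ∃ F : GradedRes I, ∀ i : ℕ, m ≤ i → F.r i = 0}

/-- The depth of `S/I` with respect to the graded maximal ideal; by the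
Auslander–Buchsbaum formula it equals `n - pd(S/I)`. -/
def depthQuot {n : ℕ} (I : Ideal (Poly K n)) : ℕ := n - pdQuot I

/-- The Castelnuovo–Mumford regularity `reg(S/I) = max { j - i : β_{i,j}(S/I) ≠ 0 }`:
the smallest `ρ` such that some (equivalently, the minimal) graded free resolution of
`S/I` has all twists in homological degree `i` bounded by `i + ρ`. (The free module
`F_i` above sits in homological degree `i + 1` of the resolution of `S/I`.) -/
def regQuot {n : ℕ} (I : Ideal (Poly K n)) : ℕ :=
  sInf {ρ : ℕ | ∃ F : GradedRes I, ∀ (i : ℕ) (k : Fin (F.r i)), F.t i k ≤ (ρ : ℤ) + i + 1}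

end EWGraph

/-!
Indices are shifted: `x₁, x₂, x₃` are `X 0, X 1, X 2`. Write `I = x₂ (a, b)` with
`a = x₁^w x₂^(w-1)` and `b = x₃`. Since `b` is prime and does not divide `a`, the syzygies of the
generators `(x₁x₂)^(wk) (x₂x₃)^(t-k)`, `k ≤ t`, of `I^t` are generated by the `t` independent
relations `a e_k - b e_(k+1)`. This gives a resolution `0 → S^t → S^(t+1) → I^t → 0` with twists
at most `2tw` and `2tw + 1`, so `pd(S/I^t) ≤ 2` and `reg(S/I^t) ≤ 2tw - 1`.

Conversely, the only monomial generator of `I^t` not divisible by `x₃` is `(x₁x₂)^(wt)`, of degree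
`2tw`: every element of `I^t` of degree `< 2tw` is divisible by `x₃`, while `I^t ⊄ (x₃)`. Hence
every graded resolution has a generator of degree `≥ 2tw`, and `I^t` is not principal (a generator
would divide `(x₂x₃)^t`, of degree `2t < 2tw`), so no resolution has length one.
-/

theorem Ideal.span_pair_pow {R : Type*} [CommSemiring R] (p q : R) (n : ℕ) :
    Ideal.span {p, q} ^ n =
      Ideal.span (Set.range fun k : Fin (n + 1) => p ^ (k : ℕ) * q ^ (n - k)) := by
  refine le_antisymm ?_ (Ideal.span_le.mpr ?_)
  · induction n with
    | zero => simp [Ideal.one_eq_top]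
    | succ n ih =>
      calc Ideal.span {p, q} ^ (n + 1)
          ≤ Ideal.span (Set.range fun k : Fin (n + 1) => p ^ (k : ℕ) * q ^ (n - k)) *
              Ideal.span {p, q} := by rw [pow_succ]; exact Ideal.mul_mono_left ih
        _ ≤ _ := by
          rw [Ideal.span_mul_span']
          refine Ideal.span_mono (Set.mul_subset_iff.mpr ?_)
          rintro _ ⟨k, rfl⟩ _ (rfl | rfl)
          · refine ⟨k.succ, ?_⟩
            simp only [Fin.val_succ, Nat.add_sub_add_right]
            ring
          · refine ⟨k.castSucc, ?_⟩
            simp only [Fin.val_castSucc, Nat.sub_add_comm (Nat.le_of_lt_succ k.isLt)]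
            ring
  · rintro _ ⟨k, rfl⟩
    have hp : p ^ (k : ℕ) ∈ Ideal.span {p, q} ^ (k : ℕ) :=
      Ideal.pow_mem_pow (Ideal.subset_span (by simp)) _
    have hq : q ^ (n - k) ∈ Ideal.span {p, q} ^ (n - k) :=
      Ideal.pow_mem_pow (Ideal.subset_span (by simp)) _
    simpa [← pow_add, Nat.add_sub_cancel' (Nat.le_of_lt_succ k.isLt)] using
      Ideal.mul_mem_mul hp hq

theorem Fin.sum_ite_val_eq {M : Type*} [AddCommMonoid M] {n : ℕ} (f : ℕ → M) (m : ℕ)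
    (hf : n ≤ m → f m = 0) : ∑ j : Fin n, (if m = j then f j else 0) = f m := by
  rw [Fin.sum_univ_eq_sum_range (fun j => if m = j then f j else 0), Finset.sum_ite_eq]
  split_ifs with h
  · rfl
  · exact (hf (by simpa using h)).symm

theorem Matrix.range_mulVecLin_of_isEmpty {R ι κ : Type*} [CommSemiring R] [Fintype ι]
    [IsEmpty ι] (M : Matrix κ ι R) : LinearMap.range M.mulVecLin = ⊥ :=
  LinearMap.range_eq_bot.mpr <| LinearMap.ext fun v => by simp [Subsingleton.elim v 0]

section PairPower

open Finset Matrix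

variable {R : Type*} [CommRing R] {a b : R}

theorem sum_pairPow_succ_eq {n : ℕ} {v : ℕ → R} {u : R} (hu : v (n + 1) = b * u) :
    ∑ k ∈ range (n + 2), v k * (a ^ k * b ^ (n + 1 - k)) =
      b * ∑ k ∈ range (n + 1), Function.update v n (v n + a * u) k * (a ^ k * b ^ (n - k)) := by
  have hlow : ∀ k ∈ range n, v k * (a ^ k * b ^ (n + 1 - k)) =
      b * (Function.update v n (v n + a * u) k * (a ^ k * b ^ (n - k))) := fun k hk => by
    rw [Function.update_of_ne (mem_range.mp hk).ne,
      Nat.sub_add_comm (mem_range.mp hk).le, pow_succ]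
    ring
  rw [sum_range_succ, sum_range_succ, sum_congr rfl hlow, ← mul_sum, sum_range_succ,
    Function.update_self, hu]
  simp only [Nat.sub_self, Nat.add_sub_cancel_left]
  ring

/-- The coefficients of the syzygies `a e_k - b e_(k+1)`, `k < n`, are encoded as a sequence `c`
supported on `1, …, n`: `c (k + 1)` is the coefficient of `a e_k - b e_(k+1)`. -/
theorem exists_pair_syzygy [IsDomain R] (hb : Prime b) (hba : ¬ b ∣ a) (n : ℕ) (v : ℕ → R)
    (hv : ∑ k ∈ range (n + 1), v k * (a ^ k * b ^ (n - k)) = 0) :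
    ∃ c : ℕ → R, c 0 = 0 ∧ (∀ m, n < m → c m = 0) ∧
      ∀ k ≤ n, v k = a * c (k + 1) - b * c k := by
  induction n generalizing v with
  | zero => exact ⟨0, rfl, fun _ _ => rfl, fun k hk => by simpa [Nat.le_zero.mp hk] using hv⟩
  | succ n ih =>
    have hlast : b ∣ v (n + 1) * a ^ (n + 1) := by
      rw [sum_range_succ, Nat.sub_self, pow_zero, mul_one, add_eq_zero_iff_neg_eq] at hv
      rw [← hv, dvd_neg]
      refine dvd_sum fun k hk => Dvd.dvd.mul_left (Dvd.dvd.mul_left ?_ _) _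
      exact dvd_pow_self b (by have := mem_range.mp hk; omega)
    obtain ⟨u, hu⟩ := (hb.dvd_or_dvd hlast).resolve_right fun h => hba (hb.dvd_of_dvd_pow h)
    -- subtracting `u` times the last syzygy leaves `b` times a syzygy of length `n`
    rw [sum_pairPow_succ_eq hu] at hv
    obtain ⟨c, hc0, hcn, hc⟩ := ih _ ((mul_eq_zero.mp hv).resolve_left hb.ne_zero)
    refine ⟨Function.update c (n + 1) (-u), ?_, fun m hm => ?_, fun k hk => ?_⟩
    · simpa using hc0
    · rw [Function.update_of_ne (by omega)]
      exact hcn m (by omega)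
    · rcases Nat.lt_or_ge k n with hkn | hkn
      · have := hc k hkn.le
        rw [Function.update_of_ne hkn.ne] at this
        rw [Function.update_of_ne (by omega), Function.update_of_ne (by omega), this]
      · rcases (Nat.le_succ_iff.mp hk).imp_left (le_antisymm · hkn) with rfl | rfl
        · have := hc k le_rfl
          rw [Function.update_self, hcn _ (Nat.lt_succ_self k)] at this
          rw [Function.update_self, Function.update_of_ne (by omega)]
          linear_combination this
        · rw [Function.update_of_ne (by omega), Function.update_self, hcn _ (by omega), hu]
          ring

variable (a b) in
def pairSyzygyMatrix (n : ℕ) : Matrix (Fin (n + 1)) (Fin n) R :=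
  Matrix.of fun k j => (if k = j.castSucc then a else 0) + (if k = j.succ then -b else 0)

theorem vecMul_pairSyzygyMatrix {n : ℕ} (g : Fin (n + 1) → R) (j : Fin n) :
    (g ᵥ* pairSyzygyMatrix a b n) j = g j.castSucc * a - g j.succ * b := by
  simp [pairSyzygyMatrix, Matrix.vecMul, dotProduct, mul_add, sum_add_distrib, sub_eq_add_neg]

theorem mulVec_pairSyzygyMatrix {n : ℕ} (c : ℕ → R) (h0 : c 0 = 0) (hn : c (n + 1) = 0)
    (k : Fin (n + 1)) :
    (pairSyzygyMatrix a b n *ᵥ fun j => c (j + 1)) k = a * c (k + 1) - b * c k := by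
  have hdiag : ∑ j : Fin n, (if (k : ℕ) = j then c (j + 1) else 0) = c (k + 1) :=
    Fin.sum_ite_val_eq (fun j => c (j + 1)) k fun h => by
      rw [show (k : ℕ) = n by omega, hn]
  have hsub : ∑ j : Fin n, (if (k : ℕ) = j + 1 then c (j + 1) else 0) = c k := by
    obtain ⟨_ | m, hm⟩ := k
    · simp [h0]
    · simpa using Fin.sum_ite_val_eq (fun j => c (j + 1)) m fun h => by
        rw [show m = n by omega, hn]
  simp only [pairSyzygyMatrix, Matrix.mulVec, dotProduct, Matrix.of_apply, add_mul, ite_mul,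
    zero_mul, sum_add_distrib, Fin.ext_iff, Fin.val_castSucc, Fin.val_succ]
  rw [← hdiag, ← hsub, mul_sum, mul_sum, sub_eq_add_neg, ← sum_neg_distrib]
  congr 1 <;> exact sum_congr rfl fun j _ => by split_ifs <;> ring

theorem ker_mulVecLin_pairSyzygyMatrix [IsDomain R] (ha : a ≠ 0) (n : ℕ) :
    LinearMap.ker (pairSyzygyMatrix a b n).mulVecLin = ⊥ := by
  refine LinearMap.ker_eq_bot'.mpr fun w hMw => ?_
  have hinj : Function.Injective fun j : Fin n => (j : ℕ) + 1 :=
    fun i j h => Fin.ext (Nat.succ_injective h)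
  set c := Function.extend (fun j : Fin n => (j : ℕ) + 1) w 0
  have hw : w = fun j : Fin n => c (j + 1) := funext fun j => (hinj.extend_apply w 0 j).symm
  have h0 : c 0 = 0 := Function.extend_apply' _ _ _ fun ⟨j, hj⟩ => by omega
  have hn : c (n + 1) = 0 := Function.extend_apply' _ _ _ fun ⟨j, hj⟩ => by omega
  have hrow : ∀ k ≤ n, a * c (k + 1) = b * c k := fun k hk => by
    have := congrFun hMw ⟨k, by omega⟩
    rw [Matrix.mulVecLin_apply, hw, mulVec_pairSyzygyMatrix c h0 hn] at this
    exact sub_eq_zero.mp this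
  have hc : ∀ k ≤ n, c k = 0 := by
    intro k
    induction k with
    | zero => exact fun _ => h0
    | succ k ih =>
      intro hk
      refine (mul_eq_zero.mp ?_).resolve_left ha
      rw [hrow k (by omega), ih (by omega), mul_zero]
  exact funext fun j => (congrFun hw j).trans (hc _ j.isLt)

theorem dotProduct_pairPow_eq_zero_iff [IsDomain R] {d : R} (hd : d ≠ 0) (hb : Prime b)
    (hba : ¬ b ∣ a) {n : ℕ} (v : Fin (n + 1) → R) :
    v ⬝ᵥ (fun k : Fin (n + 1) => (d * a) ^ (k : ℕ) * (d * b) ^ (n - k)) = 0 ↔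
      ∃ w, pairSyzygyMatrix a b n *ᵥ w = v := by
  constructor
  · intro hv
    set V : ℕ → R := fun m => if h : m < n + 1 then v ⟨m, h⟩ else 0
    have hV : ∑ k ∈ range (n + 1), V k * (a ^ k * b ^ (n - k)) = 0 := by
      refine (mul_eq_zero.mp ?_).resolve_left (pow_ne_zero n hd)
      rw [← Fin.sum_univ_eq_sum_range (fun k => V k * (a ^ k * b ^ (n - k))), mul_sum, ← hv]
      refine sum_congr rfl fun k _ => ?_
      have hk : d ^ n = d ^ (k : ℕ) * d ^ (n - k) := by
        rw [← pow_add, Nat.add_sub_cancel' (Nat.le_of_lt_succ k.isLt)]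
      simp only [V, k.isLt, dif_pos, mul_pow, hk]
      ring
    obtain ⟨c, h0, hn, hc⟩ := exists_pair_syzygy hb hba n V hV
    refine ⟨fun j => c (j + 1), funext fun k => ?_⟩
    rw [mulVec_pairSyzygyMatrix c h0 (hn _ n.lt_succ_self), ← hc k (Nat.le_of_lt_succ k.isLt)]
    exact dif_pos k.isLt
  · rintro ⟨w, rfl⟩
    rw [dotProduct_comm, dotProduct_mulVec]
    convert zero_dotProduct w
    funext j
    rw [vecMul_pairSyzygyMatrix, Fin.val_succ, Fin.val_castSucc, Pi.zero_apply,
      show n - j = n - (j + 1) + 1 by omega, pow_succ, pow_succ]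
    ring

end PairPower

theorem MvPolynomial.not_X_dvd_X_pow_mul_X_pow {σ R : Type*} [CommRing R] [IsDomain R]
    {i j k : σ} (hj : i ≠ j) (hk : i ≠ k) (m l : ℕ) :
    ¬ (X i : MvPolynomial σ R) ∣ X j ^ m * X k ^ l := fun h =>
  (X_prime.dvd_or_dvd h).elim (fun h => hj (X_dvd_X.mp (X_prime.dvd_of_dvd_pow h)))
    fun h => hk (X_dvd_X.mp (X_prime.dvd_of_dvd_pow h))

namespace EWGraph

variable {K : Type} [Field K]

theorem PieceHomog.of_isHomogeneous {n m : ℕ} {tw d : ℤ} {g : Poly K n}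
    (hg : g.IsHomogeneous m) (hd : d = tw + m) : PieceHomog tw d g := by
  rwa [PieceHomog, if_pos (by omega), show (d - tw).toNat = m by omega]

theorem PieceHomog.zero {n : ℕ} (tw d : ℤ) : PieceHomog tw d (0 : Poly K n) := by
  unfold PieceHomog
  split_ifs
  exacts [isHomogeneous_zero _ _ _, rfl]

theorem PieceHomog.totalDegree_le {n : ℕ} {d : ℤ} {g : Poly K n} (h : PieceHomog 0 d g) :
    g.totalDegree ≤ d.toNat := by
  unfold PieceHomog at h
  split_ifs at h
  · simpa using h.totalDegree_le
  · simp [h]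

theorem aug_single {n m : ℕ} (g : Fin m → Poly K n) (k : Fin m) (p : Poly K n) :
    aug g (Pi.single k p) = p * g k := by
  simp [aug, Pi.single_apply]

namespace GradedRes

variable {n : ℕ} {I : Ideal (Poly K n)}

theorem isPrincipal_of_rank_one_eq_zero (F : GradedRes I) (h : F.r 1 = 0) : I.IsPrincipal := by
  have : IsEmpty (Fin (F.r 1)) := by rw [h]; infer_instance
  have hinj : Function.Injective (aug F.g) := by
    rw [← LinearMap.ker_eq_bot, F.exact_zero, Matrix.range_mulVecLin_of_isEmpty]
  have hle : F.r 0 ≤ 1 := by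
    by_contra! h2
    let k₀ : Fin (F.r 0) := ⟨0, by omega⟩
    let k₁ : Fin (F.r 0) := ⟨1, h2⟩
    have hne : k₀ ≠ k₁ := by simp [k₀, k₁, Fin.ext_iff]
    -- by injectivity of `aug F.g` the Koszul syzygy `g k₁ e_k₀ - g k₀ e_k₁` vanishes
    have hkoszul := congrFun (hinj (a₁ := Pi.single k₀ (F.g k₁)) (a₂ := Pi.single k₁ (F.g k₀))
      (by rw [aug_single, aug_single, mul_comm])) k₀
    rw [Pi.single_eq_same, Pi.single_eq_of_ne hne] at hkoszul
    have hunit := congrFun (hinj (a₁ := Pi.single k₁ 1) (a₂ := 0)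
      (by rw [aug_single, hkoszul, mul_zero, map_zero])) k₁
    simp at hunit
  rw [← F.gspan]
  have : Subsingleton (Fin (F.r 0)) := Fin.subsingleton_iff_le_one.mpr hle
  rcases (Set.subsingleton_range F.g).eq_empty_or_singleton with h | ⟨x, h⟩
  · rw [h, Ideal.span_empty]
    exact bot_isPrincipal
  · rw [h]
    exact ⟨x, rfl⟩

def twoStepRank (m l : ℕ) : ℕ → ℕ
  | 0 => m
  | 1 => l
  | _ + 2 => 0

def ofTwoStep {m l : ℕ} (g : Fin m → Poly K n) (d : Matrix (Fin m) (Fin l) (Poly K n))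
    (t₀ : Fin m → ℤ) (t₁ : Fin l → ℤ) (hg : ∀ k, PieceHomog 0 (t₀ k) (g k))
    (hd : ∀ k j, PieceHomog (t₀ k) (t₁ j) (d k j)) (hspan : Ideal.span (Set.range g) = I)
    (hexact : LinearMap.ker (aug g) = LinearMap.range d.mulVecLin)
    (hinj : LinearMap.ker d.mulVecLin = ⊥) : GradedRes I where
  r := twoStepRank m l
  t
    | 0 => t₀
    | 1 => t₁
    | _ + 2 => fun k => k.elim0
  g := g
  ghom := hg
  gspan := hspan
  d
    | 0 => d
    | _ + 1 => fun _ j => j.elim0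
  dhom
    | 0 => hd
    | _ + 1 => fun _ j => j.elim0
  exact_zero := hexact
  exact_succ
    | 0 =>
      have : IsEmpty (Fin (twoStepRank m l 2)) := Fin.isEmpty'
      hinj.trans (Matrix.range_mulVecLin_of_isEmpty _).symm
    | i + 1 =>
      have : IsEmpty (Fin (twoStepRank m l (i + 2))) := Fin.isEmpty'
      have : IsEmpty (Fin (twoStepRank m l (i + 3))) := Fin.isEmpty'
      (LinearMap.ker_eq_bot'.mpr fun v _ => Subsingleton.elim v 0).trans
        (Matrix.range_mulVecLin_of_isEmpty _).symm

end GradedRes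

abbrev pathIdeal (K : Type) [Field K] (w : ℕ) : Ideal (Poly K 3) :=
  Ideal.span {(X 0 * X 1) ^ w, X 1 * X 2}

theorem pathIdeal_pow_eq_span_monomial (w t : ℕ) :
    pathIdeal K w ^ t = Ideal.span ((fun s => monomial s (1 : K)) ''
      Set.range fun k : Fin (t + 1) => ((k : ℕ) * w) • (Finsupp.single 0 1 + Finsupp.single 1 1) +
        (t - k) • (Finsupp.single 1 1 + Finsupp.single 2 1)) := by
  rw [pathIdeal, Ideal.span_pair_pow, ← Set.range_comp]
  congr! with k
  simp [X, monomial_mul, monomial_pow, mul_comm]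

theorem X_two_dvd_of_mem_pathIdeal_pow {w t : ℕ} {f : Poly K 3} (hf : f ∈ pathIdeal K w ^ t)
    (hdeg : f.totalDegree < 2 * t * w) : X 2 ∣ f := by
  rw [pathIdeal_pow_eq_span_monomial, mem_ideal_span_monomial_image] at hf
  rw [← Ideal.mem_span_singleton, ← Set.image_singleton, mem_ideal_span_X_image]
  intro m hm
  obtain ⟨_, ⟨k, rfl⟩, hk⟩ := hf m hm
  refine ⟨2, rfl, fun h2 => ?_⟩
  have hkt : (k : ℕ) = t := by
    have : t - (k : ℕ) ≤ m 2 := by simpa using hk 2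
    omega
  have hμ := Finsupp.degree_mono hk
  simp only [map_add, map_nsmul, Finsupp.degree_single, hkt, Nat.sub_self, zero_smul,
    smul_eq_mul] at hμ
  have hm_deg : Finsupp.degree m ≤ f.totalDegree := le_totalDegree hm
  linarith [show t * w * (1 + 1) + 0 = 2 * t * w by ring]

theorem not_pathIdeal_pow_le_span_X_two (w t : ℕ) :
    ¬ pathIdeal K w ^ t ≤ Ideal.span {X 2} := by
  intro h
  have hmem : ((X 0 * X 1) ^ w) ^ t ∈ pathIdeal K w ^ t :=
    Ideal.pow_mem_pow (Ideal.subset_span (by simp)) t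
  have hdvd := Ideal.mem_span_singleton.mp (h hmem)
  rw [← pow_mul, mul_pow] at hdvd
  exact not_X_dvd_X_pow_mul_X_pow (by decide) (by decide) _ _ hdvd

theorem GradedRes.exists_le_twist_of_pathIdeal_pow {w t : ℕ}
    (F : GradedRes (pathIdeal K w ^ t)) : ∃ k, 2 * t * w ≤ (F.t 0 k).toNat := by
  by_contra! h
  refine not_pathIdeal_pow_le_span_X_two (K := K) w t ?_
  rw [← F.gspan, Ideal.span_le]
  rintro _ ⟨k, rfl⟩
  have hgk : F.g k ∈ pathIdeal K w ^ t := F.gspan.le (Ideal.subset_span ⟨k, rfl⟩)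
  exact Ideal.mem_span_singleton.mpr <|
    X_two_dvd_of_mem_pathIdeal_pow hgk (((F.ghom k).totalDegree_le).trans_lt (h k))

theorem not_isPrincipal_pathIdeal_pow {w t : ℕ} (hw : 2 ≤ w) (ht : 1 ≤ t) :
    ¬ (pathIdeal K w ^ t).IsPrincipal := by
  rintro ⟨f, hf⟩
  have hfI : f ∈ pathIdeal K w ^ t := hf ▸ Ideal.mem_span_singleton_self f
  have hmem : (X 1 * X 2) ^ t ∈ pathIdeal K w ^ t :=
    Ideal.pow_mem_pow (Ideal.subset_span (by simp)) t
  rw [hf] at hmem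
  have hdvd : f ∣ (X 1 * X 2) ^ t := Ideal.mem_span_singleton.mp hmem
  have hdeg : f.totalDegree ≤ 2 * t :=
    (totalDegree_le_of_dvd_of_isDomain hdvd (pow_ne_zero _ (mul_ne_zero (X_ne_zero _)
      (X_ne_zero _)))).trans
      (((isHomogeneous_X K 1).mul (isHomogeneous_X K 2)).pow t).totalDegree_le
  refine not_pathIdeal_pow_le_span_X_two (K := K) w t ?_
  rw [hf]
  exact Ideal.span_singleton_le_span_singleton.mpr
    (X_two_dvd_of_mem_pathIdeal_pow hfI (by nlinarith))

theorem pieceHomog_pathIdeal_gen (w t : ℕ) (k : Fin (t + 1)) :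
    PieceHomog 0 (2 * w * k + 2 * (t - k))
      (((X 0 * X 1) ^ w) ^ (k : ℕ) * (X 1 * X 2) ^ (t - k) : Poly K 3) := by
  refine PieceHomog.of_isHomogeneous
    (((((isHomogeneous_X K 0).mul (isHomogeneous_X K 1)).pow w).pow k).mul
      (((isHomogeneous_X K 1).mul (isHomogeneous_X K 2)).pow (t - k))) ?_
  push_cast [Nat.cast_sub (Nat.le_of_lt_succ k.isLt)]
  ring

theorem pieceHomog_pathIdeal_syzygy {w : ℕ} (hw : 1 ≤ w) (t : ℕ) (k : Fin (t + 1))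
    (j : Fin t) :
    PieceHomog (2 * w * k + 2 * (t - k)) (2 * w * j + 2 * (t - j) + 2 * w - 1)
      (pairSyzygyMatrix (X 0 ^ w * X 1 ^ (w - 1) : Poly K 3) (X 2) t k j) := by
  simp only [pairSyzygyMatrix, Matrix.of_apply]
  by_cases h₁ : k = j.castSucc
  · rw [if_pos h₁, if_neg (by simp [h₁, Fin.ext_iff]), add_zero]
    refine PieceHomog.of_isHomogeneous
      ((isHomogeneous_X_pow 0 w).mul (isHomogeneous_X_pow 1 (w - 1))) ?_
    rw [h₁, Fin.val_castSucc]
    push_cast [Nat.cast_sub hw]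
    ring
  · by_cases h₂ : k = j.succ
    · rw [if_neg h₁, if_pos h₂, zero_add]
      refine PieceHomog.of_isHomogeneous (isHomogeneous_X K 2).neg ?_
      rw [h₂, Fin.val_succ]
      push_cast
      ring
    · rw [if_neg h₁, if_neg h₂, add_zero]
      exact PieceHomog.zero _ _

theorem ker_aug_pathIdeal_gen {w : ℕ} (hw : 1 ≤ w) (t : ℕ) :
    LinearMap.ker (aug fun k : Fin (t + 1) =>
        (((X 0 * X 1) ^ w) ^ (k : ℕ) * (X 1 * X 2) ^ (t - k) : Poly K 3)) =
      LinearMap.range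
        (pairSyzygyMatrix (X 0 ^ w * X 1 ^ (w - 1) : Poly K 3) (X 2) t).mulVecLin := by
  have hsplit : (X 0 * X 1 : Poly K 3) ^ w = X 1 * (X 0 ^ w * X 1 ^ (w - 1)) := by
    rw [mul_pow, ← pow_sub_one_mul (by omega : w ≠ 0) (X 1 : Poly K 3)]
    ring
  ext v
  rw [LinearMap.mem_ker, LinearMap.mem_range]
  simp only [hsplit]
  exact dotProduct_pairPow_eq_zero_iff (X_ne_zero 1) X_prime
    (not_X_dvd_X_pow_mul_X_pow (by decide) (by decide) _ _) v

def pathIdealRes (K : Type) [Field K] {w : ℕ} (hw : 1 ≤ w) (t : ℕ) :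
    GradedRes (pathIdeal K w ^ t) :=
  .ofTwoStep _ _ _ _ (pieceHomog_pathIdeal_gen w t) (pieceHomog_pathIdeal_syzygy hw t)
    (Ideal.span_pair_pow _ _ t).symm (ker_aug_pathIdeal_gen hw t)
    (ker_mulVecLin_pairSyzygyMatrix (mul_ne_zero (pow_ne_zero _ (X_ne_zero 0))
      (pow_ne_zero _ (X_ne_zero 1))) t)

theorem pdQuot_pathIdeal_pow {w t : ℕ} (hw : 2 ≤ w) (ht : 1 ≤ t) :
    pdQuot (pathIdeal K w ^ t) = 2 := by
  refine IsLeast.csInf_eq ⟨⟨pathIdealRes K (by omega) t, fun i hi => ?_⟩, fun m ⟨F, hF⟩ => ?_⟩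
  · obtain ⟨i, rfl⟩ := Nat.exists_eq_add_of_le' hi
    rfl
  · by_contra! hm
    exact not_isPrincipal_pathIdeal_pow hw ht
      (F.isPrincipal_of_rank_one_eq_zero (hF 1 (by omega)))

theorem regQuot_pathIdeal_pow {w : ℕ} (hw : 1 ≤ w) (t : ℕ) :
    regQuot (pathIdeal K w ^ t) = 2 * t * w - 1 := by
  refine IsLeast.csInf_eq ⟨⟨pathIdealRes K hw t, ?_⟩, fun ρ ⟨F, hF⟩ => ?_⟩
  · have hcast : ((2 * t * w : ℕ) : ℤ) - 1 ≤ ((2 * t * w - 1 : ℕ) : ℤ) := by omega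
    push_cast at hcast
    rintro (_ | _ | i) k
    · have hk : (k : ℕ) ≤ t := Nat.le_of_lt_succ k.isLt
      change 2 * (w : ℤ) * (k : ℕ) + 2 * (t - (k : ℕ)) ≤ _
      have : (0 : ℤ) ≤ (w - 1) * (t - (k : ℕ)) := mul_nonneg (by omega) (by omega)
      push_cast
      linarith
    · have hk : (k : ℕ) + 1 ≤ t := k.isLt
      change 2 * (w : ℤ) * (k : ℕ) + 2 * (t - (k : ℕ)) + 2 * w - 1 ≤ _
      have : (0 : ℤ) ≤ (w - 1) * (t - (k : ℕ) - 1) := mul_nonneg (by omega) (by omega)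
      push_cast
      linarith
    · exact k.elim0
  · obtain ⟨k, hk⟩ := F.exists_le_twist_of_pathIdeal_pow
    have := hF 0 k
    omega

/-- for `I = ((x_1x_2)^{w_1}, x_2x_3)` with `w_1 ≥ 2`, for all `t ≥ 1`:
`reg(S/I^t) = 2 t w_1 - 1` and `depth(S/I^t) = 1`. -/
theorem path3_powers (K : Type) [Field K] (w1 : ℕ) (hw1 : 2 ≤ w1)
    (t : ℕ) (ht : 1 ≤ t) :
    regQuot ((Ideal.span {((X 0 * X 1 : Poly K 3)) ^ w1, X 1 * X 2}) ^ t) =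
        2 * t * w1 - 1 ∧
      depthQuot ((Ideal.span {((X 0 * X 1 : Poly K 3)) ^ w1, X 1 * X 2}) ^ t) = 1 :=
  ⟨regQuot_pathIdeal_pow (by omega) t, by rw [depthQuot, pdQuot_pathIdeal_pow hw1 ht]⟩

end EWGraph
end
end
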